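/- arXiv:1007.2769 — 2 statements merged into one kernel-verified Lean document; each statement's English description precedes it below -/
import Mathlib

section
/- Fix m ≥ 1 and p_0, p_1 ∈ ℕ with p_0 + p_1 = m, and work in B_{2m} = G(2,2m). For S ⊆ Fin 2m let Δ_S = {v ∈ I(2,2m) : |v| is fixed-point-free and {i : z_i(v) = 0} = S}, and let C_S = Σ_{v ∈ Δ_S} C_v ∈ M. Then the subspace of M spanned by {C_S : |S| = 2p_0} is invariant under all the operators φ(g) for g ∈ B_{2m}, has dimension binomial(2m, 2p_0), and the resulting representation of B_{2m} on it is irreducible. -/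
noncomputable section

/-- The wreath product `G(r,n) = C_r ≀ S_n`, realized as pairs of a color vector
`z : Fin n → ZMod r` and a permutation `p` of `Fin n`. -/
@[ext] structure WreathG (r n : ℕ) where
  z : Fin n → ZMod r
  p : Equiv.Perm (Fin n)

namespace WreathG

variable {r n : ℕ}

instance : One (WreathG r n) := ⟨⟨0, 1⟩⟩
instance : Mul (WreathG r n) := ⟨fun g h => ⟨g.z + h.z ∘ g.p.symm, g.p * h.p⟩⟩
instance : Inv (WreathG r n) := ⟨fun g => ⟨-(g.z ∘ g.p), g.p⁻¹⟩⟩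

@[simp] theorem one_z : (1 : WreathG r n).z = 0 := rfl
@[simp] theorem one_p : (1 : WreathG r n).p = 1 := rfl
@[simp] theorem mul_z (a b : WreathG r n) : (a * b).z = a.z + b.z ∘ a.p.symm := rfl
@[simp] theorem mul_p (a b : WreathG r n) : (a * b).p = a.p * b.p := rfl
@[simp] theorem inv_z (a : WreathG r n) : (a⁻¹).z = -(a.z ∘ a.p) := rfl
@[simp] theorem inv_p (a : WreathG r n) : (a⁻¹).p = a.p⁻¹ := rfl

instance : Group (WreathG r n) :=
  Group.ofLeftAxioms
    (fun a b c => by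
      refine WreathG.ext ?_ (mul_assoc a.p b.p c.p)
      funext x
      show (a.z x + b.z (a.p.symm x)) + c.z ((a.p * b.p).symm x)
          = a.z x + (b.z (a.p.symm x) + c.z (b.p.symm (a.p.symm x)))
      have h : (a.p * b.p).symm x = b.p.symm (a.p.symm x) := rfl
      rw [h, add_assoc])
    (fun a => by
      refine WreathG.ext ?_ (one_mul a.p)
      funext x
      show 0 + a.z ((1 : Equiv.Perm (Fin n)).symm x) = a.z x
      rw [zero_add]; rfl)
    (fun a => by
      refine WreathG.ext ?_ (inv_mul_cancel a.p)
      funext x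
      show -(a.z (a.p x)) + a.z ((a.p⁻¹).symm x) = 0
      have h : (a.p⁻¹).symm x = a.p x := rfl
      rw [h, neg_add_cancel])

/-- An absolute involution of `G(r,n)`: `|v|² = 1` and `z ∘ |v| = z`. -/
def IsAbsInv (v : WreathG r n) : Prop := v.p ^ 2 = 1 ∧ v.z ∘ v.p = v.z

instance (v : WreathG r n) : Decidable (IsAbsInv v) :=
  inferInstanceAs (Decidable (_ ∧ _))

/-- Absolute conjugation `τ·(z,σ)·τ⁻¹ = (z ∘ τ⁻¹, τστ⁻¹)`. -/
def aconj (τ : Equiv.Perm (Fin n)) (v : WreathG r n) : WreathG r n :=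
  ⟨v.z ∘ τ.symm, τ * v.p * τ⁻¹⟩

theorem IsAbsInv.aconj {v : WreathG r n} (h : IsAbsInv v) (τ : Equiv.Perm (Fin n)) :
    IsAbsInv (WreathG.aconj τ v) := by
  obtain ⟨h1, h2⟩ := h
  constructor
  · show (τ * v.p * τ⁻¹) ^ 2 = 1
    have key : (τ * v.p * τ⁻¹) * (τ * v.p * τ⁻¹) = τ * (v.p * v.p) * τ⁻¹ := by
      simp [mul_assoc]
    rw [sq, key, ← sq, h1, mul_one, mul_inv_cancel]
  · funext x
    have := congrFun h2 (τ.symm x)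
    simpa [WreathG.aconj, Function.comp] using this

/-- `⟨g,v⟩ = ∑ i z_i(g)·z_i(v) ∈ ZMod r`. -/
def pairing (g v : WreathG r n) : ZMod r := ∑ i, g.z i * v.z i

/-- `inv_v(g)`: the number of pairs `i < j` with `|v|(i) = j` and `|g|(i) > |g|(j)`. -/
def invv (v g : WreathG r n) : ℕ :=
  Nat.card {q : Fin n × Fin n // q.1 < q.2 ∧ v.p q.1 = q.2 ∧ g.p q.2 < g.p q.1}

/-- The number of inversions of a permutation. -/
def invPerm (σ : Equiv.Perm (Fin n)) : ℕ :=
  Nat.card {q : Fin n × Fin n // q.1 < q.2 ∧ σ q.2 < σ q.1}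

/-- `fix_i(v)`: the number of `j` with `|v|(j) = j` and `z_j(v) = i`. -/
def fixc (v : WreathG r n) (i : ZMod r) : ℕ :=
  Nat.card {j : Fin n // v.p j = j ∧ v.z j = i}

/-- `pair_i(v)`: the number of pairs `j < k` with `|v|(j) = k` and `z_j(v) = z_k(v) = i`. -/
def pairc (v : WreathG r n) (i : ZMod r) : ℕ :=
  Nat.card {q : Fin n × Fin n // q.1 < q.2 ∧ v.p q.1 = q.2 ∧ v.z q.1 = i ∧ v.z q.2 = i}

instance : DecidableEq (WreathG r n) := fun a b =>
  decidable_of_iff (a.z = b.z ∧ a.p = b.p)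
    (by constructor
        · rintro ⟨h1, h2⟩; exact WreathG.ext h1 h2
        · rintro rfl; exact ⟨rfl, rfl⟩)

instance [NeZero r] : Fintype (WreathG r n) :=
  Fintype.ofEquiv ((Fin n → ZMod r) × Equiv.Perm (Fin n))
    { toFun := fun x => ⟨x.1, x.2⟩
      invFun := fun g => (g.z, g.p)
      left_inv := fun _ => rfl
      right_inv := fun _ => rfl }

end WreathG

/-- The set `I(r,n)` of absolute involutions, as a subtype. -/
abbrev AbsInv (r n : ℕ) := {v : WreathG r n // WreathG.IsAbsInv v}

/-- The model space `M`: the complex vector space with basis `{C_v : v ∈ I(r,n)}`. -/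
abbrev ModelSpace (r n : ℕ) := AbsInv r n →₀ ℂ

/-- `ζ_r = exp(2πi/r)`. -/
def zetaC (r : ℕ) : ℂ := Complex.exp (2 * Real.pi * Complex.I / r)

/-- `ζ_r` raised to an exponent in `ZMod r` (well defined since `ζ_r^r = 1`). -/
def zetaPow (r : ℕ) (a : ZMod r) : ℂ := zetaC r ^ a.val

/-- The Gelfand model operator `ϱ(g) C_v = ζ_r^{⟨g,v⟩} (−1)^{inv_v(g)} C_{|g|v|g|⁻¹}`. -/
def modelRho {r n : ℕ} (g : WreathG r n) :
    ModelSpace r n →ₗ[ℂ] ModelSpace r n :=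
  Finsupp.lsum ℂ fun v =>
    ((zetaPow r (WreathG.pairing g v.1) * (-1 : ℂ) ^ WreathG.invv v.1 g) •
      Finsupp.lsingle (⟨WreathG.aconj g.p v.1, v.2.aconj g.p⟩ : AbsInv r n))

/-- The auxiliary operator `φ(g) C_v = ζ_r^{⟨g,v⟩} C_{|g|v|g|⁻¹}`. -/
def modelPhi {r n : ℕ} (g : WreathG r n) :
    ModelSpace r n →ₗ[ℂ] ModelSpace r n :=
  Finsupp.lsum ℂ fun v =>
    ((zetaPow r (WreathG.pairing g v.1)) •
      Finsupp.lsingle (⟨WreathG.aconj g.p v.1, v.2.aconj g.p⟩ : AbsInv r n))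

/-- `(−1)` raised to an exponent in `ZMod 2`. -/
def negOnePow2 (a : ZMod 2) : ℂ := (-1 : ℂ) ^ a.val

/-- The Gelfand model operator for `B_n = G(2,n)`:
`ϱ(g) C_v = (−1)^{⟨g,v⟩} (−1)^{inv_v(g)} C_{|g|v|g|⁻¹}`. -/
def modelRho2 {n : ℕ} (g : WreathG 2 n) : ModelSpace 2 n →ₗ[ℂ] ModelSpace 2 n :=
  Finsupp.lsum ℂ fun v =>
    ((negOnePow2 (WreathG.pairing g v.1) * (-1 : ℂ) ^ WreathG.invv v.1 g) •
      Finsupp.lsingle (⟨WreathG.aconj g.p v.1, v.2.aconj g.p⟩ : AbsInv 2 n))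

/-- The auxiliary operator for `B_n = G(2,n)`: `φ(g) C_v = (−1)^{⟨g,v⟩} C_{|g|v|g|⁻¹}`. -/
def modelPhi2 {n : ℕ} (g : WreathG 2 n) : ModelSpace 2 n →ₗ[ℂ] ModelSpace 2 n :=
  Finsupp.lsum ℂ fun v =>
    ((negOnePow2 (WreathG.pairing g v.1)) •
      Finsupp.lsingle (⟨WreathG.aconj g.p v.1, v.2.aconj g.p⟩ : AbsInv 2 n))

/-- `Δ_S`: the set of involutions of `B_{2m}` whose underlying permutation is
fixed-point-free and whose set of `0`-colored positions is exactly `S`. -/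
def DeltaS {m : ℕ} (S : Finset (Fin (2 * m))) : Finset (AbsInv 2 (2 * m)) :=
  Finset.univ.filter fun v =>
    (∀ j, v.1.p j ≠ j) ∧ (Finset.univ.filter fun i => v.1.z i = 0) = S

/-- `C_S = ∑_{v ∈ Δ_S} C_v`. -/
def CS {m : ℕ} (S : Finset (Fin (2 * m))) : ModelSpace 2 (2 * m) :=
  ∑ v ∈ DeltaS S, Finsupp.single v 1

/-!
The diagonal elements `(z, 1)` of `B_{2m}` act on `C_S` by the character
`χ_S(z) = (-1)^{∑_{i ∉ S} z_i}`, and distinct `S` give distinct characters, while `φ(0, τ)`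
sends `C_S` to `C_{τ S}`. Averaging `φ(z, 1)` against `χ_S` therefore extracts the
`C_S`-coefficient of any vector of the span. This proves that the `C_S` are linearly
independent (each is nonzero, since for `|S|` even some fixed-point-free involution preserves `S`),
and that a nonzero invariant subspace contains some `C_S`, hence all of them, the permutations
acting transitively on the subsets of a given size.
-/

open Finset

theorem negOnePow2_add (a b : ZMod 2) : negOnePow2 (a + b) = negOnePow2 a * negOnePow2 b := by
  rw [negOnePow2, negOnePow2, negOnePow2, ← pow_add, ZMod.val_add, ← neg_one_pow_eq_pow_mod_two]

theorem Equiv.Perm.exists_sq_eq_one_forall_apply_ne {α : Type*} [Fintype α]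
    (h : Even (Fintype.card α)) : ∃ σ : Equiv.Perm α, σ ^ 2 = 1 ∧ ∀ x, σ x ≠ x := by
  obtain ⟨k, hk⟩ := h
  let e : α ≃ Fin k ⊕ Fin k := (Fintype.equivFinOfCardEq hk).trans finSumFinEquiv.symm
  refine ⟨e.trans ((Equiv.sumComm _ _).trans e.symm), ?_, fun x hx => ?_⟩
  · ext x
    simp [sq]
  · apply_fun e at hx
    rcases hex : e x with y | y <;> simp [hex] at hx

theorem Finset.exists_perm_map_eq {α : Type*} [Fintype α] [DecidableEq α] {S T : Finset α}
    (h : #S = #T) : ∃ τ : Equiv.Perm α, S.map τ.toEmbedding = T := by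
  refine ⟨(Finset.equivOfCardEq h).extendSubtype, eq_of_subset_of_card_le ?_ (by simp [h])⟩
  intro y hy
  obtain ⟨x, hx, rfl⟩ := mem_map.1 hy
  exact Equiv.extendSubtype_mem _ x hx

namespace WreathG

variable {r n : ℕ}

theorem aconj_aconj_inv (τ : Equiv.Perm (Fin n)) (v : WreathG r n) :
    aconj τ⁻¹ (aconj τ v) = v := by
  ext x
  · simp [aconj, Equiv.Perm.inv_def]
  · simp [aconj, mul_assoc]

end WreathG

def absConj {r n : ℕ} (τ : Equiv.Perm (Fin n)) : Equiv.Perm (AbsInv r n) where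
  toFun v := ⟨WreathG.aconj τ v.1, v.2.aconj τ⟩
  invFun v := ⟨WreathG.aconj τ⁻¹ v.1, v.2.aconj τ⁻¹⟩
  left_inv v := Subtype.ext (WreathG.aconj_aconj_inv τ v.1)
  right_inv v := Subtype.ext (by simpa using WreathG.aconj_aconj_inv τ⁻¹ v.1)

section DeltaS

variable {m : ℕ}

theorem mem_DeltaS {S : Finset (Fin (2 * m))} {v : AbsInv 2 (2 * m)} :
    v ∈ DeltaS S ↔ (∀ j, v.1.p j ≠ j) ∧ univ.filter (fun i => v.1.z i = 0) = S := by
  simp [DeltaS]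

theorem absConj_mem_DeltaS_map_iff (τ : Equiv.Perm (Fin (2 * m))) {S : Finset (Fin (2 * m))}
    {v : AbsInv 2 (2 * m)} : absConj τ v ∈ DeltaS (S.map τ.toEmbedding) ↔ v ∈ DeltaS S := by
  have hzero : univ.filter (fun i => (absConj τ v).1.z i = 0) =
      (univ.filter fun i => v.1.z i = 0).map τ.toEmbedding := by
    ext i
    simp [absConj, WreathG.aconj]
  have hfix : (∀ j, (absConj τ v).1.p j ≠ j) ↔ ∀ j, v.1.p j ≠ j := by
    refine τ.symm.forall_congr fun {j} => ?_
    simp [absConj, WreathG.aconj, Equiv.Perm.inv_def, ← Equiv.eq_symm_apply]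
  rw [mem_DeltaS, mem_DeltaS, hzero, hfix, (map_injective τ.toEmbedding).eq_iff]

theorem z_eq_ite_of_mem_DeltaS {S : Finset (Fin (2 * m))} {v : AbsInv 2 (2 * m)}
    (hv : v ∈ DeltaS S) (i : Fin (2 * m)) : v.1.z i = if i ∈ S then 0 else 1 := by
  rw [← (mem_DeltaS.1 hv).2]
  split_ifs with h
  · exact (mem_filter.1 h).2
  · have hz : v.1.z i ≠ 0 := by simpa using h
    generalize v.1.z i = a at hz ⊢
    revert a
    decide

theorem pairing_eq_sum_compl {S : Finset (Fin (2 * m))} {v : AbsInv 2 (2 * m)}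
    (hv : v ∈ DeltaS S) (g : WreathG 2 (2 * m)) :
    WreathG.pairing g v.1 = ∑ i ∈ Sᶜ, g.z i := by
  have h : ∀ i, g.z i * v.1.z i = if i ∈ Sᶜ then g.z i else 0 := fun i => by
    by_cases hi : i ∈ S <;> simp [z_eq_ite_of_mem_DeltaS hv, hi]
  simp only [WreathG.pairing, h, sum_ite_mem, univ_inter]

theorem DeltaS_nonempty {S : Finset (Fin (2 * m))} (hS : Even #S) : (DeltaS S).Nonempty := by
  have hSc : Even (Fintype.card {i // i ∉ S}) := by
    rw [Fintype.card_subtype_compl, Fintype.card_coe, Fintype.card_fin]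
    exact (Nat.even_sub (card_le_univ S |>.trans_eq (Fintype.card_fin _))).2
      (iff_of_true (even_two_mul m) hS)
  obtain ⟨σ, hσ, hσfix⟩ := Equiv.Perm.exists_sq_eq_one_forall_apply_ne
    (α := {i // i ∈ S}) (by rwa [Fintype.card_coe])
  obtain ⟨σ', hσ', hσ'fix⟩ := Equiv.Perm.exists_sq_eq_one_forall_apply_ne hSc
  set p := Equiv.Perm.subtypeCongrHom (· ∈ S) (σ, σ')
  have hp_mem : ∀ i, p i ∈ S ↔ i ∈ S := fun i => by
    by_cases h : i ∈ S
    · simp [p, Equiv.Perm.subtypeCongr.left_apply _ _ h, h]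
    · simpa [p, Equiv.Perm.subtypeCongr.right_apply _ _ h, h] using (σ' ⟨i, h⟩).2
  have hp_ne : ∀ i, p i ≠ i := fun i => by
    by_cases h : i ∈ S
    · simpa [p, Equiv.Perm.subtypeCongrHom, Equiv.Perm.subtypeCongr.left_apply _ _ h,
        Subtype.ext_iff] using hσfix ⟨i, h⟩
    · simpa [p, Equiv.Perm.subtypeCongrHom, Equiv.Perm.subtypeCongr.right_apply _ _ h,
        Subtype.ext_iff] using hσ'fix ⟨i, h⟩
  refine ⟨⟨⟨fun i => if i ∈ S then 0 else 1, p⟩, ?_, ?_⟩, mem_DeltaS.2 ⟨hp_ne, ?_⟩⟩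
  · rw [← map_pow, Prod.pow_mk, hσ, hσ', Prod.mk_one_one, map_one]
  · funext i
    simp [hp_mem]
  · ext i
    simp

end DeltaS

section ModelAction

variable {m : ℕ}

theorem CS_apply_of_mem {S : Finset (Fin (2 * m))} {v : AbsInv 2 (2 * m)} (hv : v ∈ DeltaS S) :
    CS S v = 1 := by
  simp [CS, Finsupp.finsetSum_apply, Finsupp.single_apply, hv]

theorem CS_ne_zero {S : Finset (Fin (2 * m))} (hS : Even #S) : CS S ≠ 0 := fun h => by
  obtain ⟨v, hv⟩ := DeltaS_nonempty hS
  simpa [h] using CS_apply_of_mem hv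

theorem modelPhi2_single {n : ℕ} (g : WreathG 2 n) (v : AbsInv 2 n) :
    modelPhi2 g (Finsupp.single v 1) =
      negOnePow2 (WreathG.pairing g v.1) • Finsupp.single (absConj g.p v) 1 := by
  simp [modelPhi2, absConj]

theorem modelPhi2_CS (g : WreathG 2 (2 * m)) (S : Finset (Fin (2 * m))) :
    modelPhi2 g (CS S) = negOnePow2 (∑ i ∈ Sᶜ, g.z i) • CS (S.map g.p.toEmbedding) := by
  rw [CS, CS, map_sum, smul_sum]
  exact sum_equiv (absConj g.p) (fun v => (absConj_mem_DeltaS_map_iff g.p).symm)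
    fun v hv => by rw [modelPhi2_single, pairing_eq_sum_compl hv]

end ModelAction

section Characters

variable {N : ℕ}

def diagChar (S : Finset (Fin N)) : AddChar (Fin N → ZMod 2) ℂ where
  toFun z := negOnePow2 (∑ i ∈ Sᶜ, z i)
  map_zero_eq_one' := by simp [negOnePow2]
  map_add_eq_mul' z w := by simp only [Pi.add_apply, sum_add_distrib, negOnePow2_add]

theorem diagChar_apply (S : Finset (Fin N)) (z : Fin N → ZMod 2) :
    diagChar S z = negOnePow2 (∑ i ∈ Sᶜ, z i) := rfl

theorem diagChar_single (S : Finset (Fin N)) (i : Fin N) :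
    diagChar S (Pi.single i 1) = if i ∈ S then 1 else -1 := by
  by_cases hi : i ∈ S <;> simp [diagChar_apply, sum_pi_single', negOnePow2, hi, ZMod.val_one]

theorem diagChar_mul_eq_zero_iff {S T : Finset (Fin N)} :
    diagChar S * diagChar T = 0 ↔ S = T := by
  refine ⟨fun h => ?_, ?_⟩
  · ext i
    have hi : diagChar S (Pi.single i 1) * diagChar T (Pi.single i 1) = 1 := by
      rw [← AddChar.mul_apply, h, AddChar.zero_apply]
    by_cases hS : i ∈ S <;> by_cases hT : i ∈ T <;> simp_all [diagChar_single] <;>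
      norm_num at hi
  · rintro rfl
    ext z
    rw [AddChar.mul_apply, diagChar_apply, ← negOnePow2_add, CharTwo.add_self_eq_zero]
    rfl

theorem sum_diagChar_mul (S T : Finset (Fin N)) :
    ∑ z, diagChar S z * diagChar T z =
      if S = T then (Fintype.card (Fin N → ZMod 2) : ℂ) else 0 := by
  simp_rw [← AddChar.mul_apply, AddChar.sum_eq_ite, diagChar_mul_eq_zero_iff]

end Characters

section IsotypicProj

variable {m : ℕ}

theorem modelPhi2_diag_CS (z : Fin (2 * m) → ZMod 2) (S : Finset (Fin (2 * m))) :
    modelPhi2 ⟨z, 1⟩ (CS S) = diagChar S z • CS S := by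
  rw [modelPhi2_CS]
  simp [diagChar_apply, Equiv.Perm.one_def]

def isotypicProj (S : Finset (Fin (2 * m))) : Module.End ℂ (ModelSpace 2 (2 * m)) :=
  (Fintype.card (Fin (2 * m) → ZMod 2) : ℂ)⁻¹ • ∑ z, diagChar S z • modelPhi2 ⟨z, 1⟩

theorem isotypicProj_CS (S T : Finset (Fin (2 * m))) :
    isotypicProj S (CS T) = if S = T then CS T else 0 := by
  have hcard : (Fintype.card (Fin (2 * m) → ZMod 2) : ℂ) ≠ 0 :=
    Nat.cast_ne_zero.2 Fintype.card_ne_zero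
  simp only [isotypicProj, LinearMap.smul_apply, LinearMap.sum_apply, modelPhi2_diag_CS,
    smul_smul, ← sum_smul, sum_diagChar_mul, ite_smul, zero_smul, smul_ite, smul_zero,
    inv_mul_cancel₀ hcard, one_smul]

theorem isotypicProj_sum_smul_CS {ι : Type*} [Fintype ι] {f : ι → Finset (Fin (2 * m))}
    (hf : Function.Injective f) (c : ι → ℂ) (i : ι) :
    isotypicProj (f i) (∑ j, c j • CS (f j)) = c i • CS (f i) := by
  classical
  simp only [map_sum, map_smul, isotypicProj_CS, hf.eq_iff, smul_ite, smul_zero, sum_ite_eq,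
    mem_univ, if_true]

theorem isotypicProj_mem {U : Submodule ℂ (ModelSpace 2 (2 * m))}
    (hU : ∀ g : WreathG 2 (2 * m), ∀ x ∈ U, modelPhi2 g x ∈ U) (S : Finset (Fin (2 * m)))
    {x : ModelSpace 2 (2 * m)} (hx : x ∈ U) : isotypicProj S x ∈ U := by
  simp only [isotypicProj, LinearMap.smul_apply, LinearMap.sum_apply]
  exact U.smul_mem _ (U.sum_mem fun z _ => U.smul_mem _ (hU _ _ hx))

end IsotypicProj

section SpanCS

variable {m : ℕ}

def spanCS (m k : ℕ) : Submodule ℂ (ModelSpace 2 (2 * m)) :=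
  Submodule.span ℂ {x | ∃ S : Finset (Fin (2 * m)), S.card = k ∧ x = CS S}

theorem spanCS_eq_span_range (k : ℕ) :
    spanCS m k =
      Submodule.span ℂ (Set.range fun S : {S : Finset (Fin (2 * m)) // #S = k} => CS S.1) := by
  unfold spanCS
  congr 1
  ext x
  exact ⟨fun ⟨S, hS, h⟩ => ⟨⟨S, hS⟩, h.symm⟩, fun ⟨S, h⟩ => ⟨S.1, S.2, h.symm⟩⟩

theorem CS_mem_spanCS {S : Finset (Fin (2 * m))} : CS S ∈ spanCS m #S :=
  Submodule.subset_span ⟨S, rfl, rfl⟩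

theorem modelPhi2_mem_spanCS {k : ℕ} (g : WreathG 2 (2 * m)) {x : ModelSpace 2 (2 * m)}
    (hx : x ∈ spanCS m k) : modelPhi2 g x ∈ spanCS m k := by
  refine (Submodule.span_le (p := (spanCS m k).comap (modelPhi2 g))).2 ?_ hx
  rintro _ ⟨S, rfl, rfl⟩
  rw [SetLike.mem_coe, Submodule.mem_comap, modelPhi2_CS]
  exact Submodule.smul_mem _ _ (by simpa using CS_mem_spanCS (S := S.map g.p.toEmbedding))

theorem linearIndependent_CS {k : ℕ} (hk : Even k) :
    LinearIndependent ℂ fun S : {S : Finset (Fin (2 * m)) // #S = k} => CS S.1 := by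
  refine Fintype.linearIndependent_iff.2 fun c hc S => ?_
  have h := isotypicProj_sum_smul_CS Subtype.val_injective c S
  rw [hc, map_zero, eq_comm, smul_eq_zero] at h
  exact h.resolve_right (CS_ne_zero (by rwa [S.2]))

theorem finrank_spanCS {k : ℕ} (hk : Even k) :
    Module.finrank ℂ (spanCS m k) = (2 * m).choose k := by
  rw [spanCS_eq_span_range, finrank_span_eq_card (linearIndependent_CS hk),
    Fintype.card_finset_len, Fintype.card_fin]

theorem spanCS_ne_bot {k : ℕ} (hk : Even k) (hkm : k ≤ 2 * m) : spanCS m k ≠ ⊥ := fun h => by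
  have := finrank_spanCS (m := m) hk
  rw [h, finrank_bot] at this
  exact (Nat.choose_pos hkm).ne this

theorem spanCS_le_of_CS_mem {U : Submodule ℂ (ModelSpace 2 (2 * m))}
    (hU : ∀ g : WreathG 2 (2 * m), ∀ x ∈ U, modelPhi2 g x ∈ U) {S : Finset (Fin (2 * m))}
    (hS : CS S ∈ U) : spanCS m #S ≤ U := by
  refine Submodule.span_le.2 ?_
  rintro _ ⟨T, hT, rfl⟩
  obtain ⟨τ, rfl⟩ := exists_perm_map_eq hT.symm
  simpa [modelPhi2_CS, negOnePow2] using hU ⟨0, τ⟩ _ hS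

theorem eq_bot_or_eq_spanCS {k : ℕ} {U : Submodule ℂ (ModelSpace 2 (2 * m))}
    (hUk : U ≤ spanCS m k) (hU : ∀ g : WreathG 2 (2 * m), ∀ x ∈ U, modelPhi2 g x ∈ U) :
    U = ⊥ ∨ U = spanCS m k := by
  refine or_iff_not_imp_left.2 fun hne => ?_
  obtain ⟨x, hxU, hx0⟩ := (Submodule.ne_bot_iff U).1 hne
  obtain ⟨c, rfl⟩ := (Submodule.mem_span_range_iff_exists_fun ℂ).1
    (spanCS_eq_span_range (m := m) k ▸ hUk hxU)
  obtain ⟨S, hS⟩ : ∃ S, c S ≠ 0 := by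
    by_contra! h
    exact hx0 (by simp [h])
  have hCS : CS S.1 ∈ U := by
    have h := isotypicProj_mem hU S.1 hxU
    rw [isotypicProj_sum_smul_CS Subtype.val_injective] at h
    exact (U.smul_mem_iff hS).1 h
  exact le_antisymm hUk (S.2 ▸ spanCS_le_of_CS_mem hU hCS)

end SpanCS

theorem span_CS_irreducible_general (m p₀ p₁ : ℕ) (hs : p₀ + p₁ = m) :
    ∀ W : Submodule ℂ (ModelSpace 2 (2 * m)),
      W = Submodule.span ℂ
          {x | ∃ S : Finset (Fin (2 * m)), S.card = 2 * p₀ ∧ x = CS S} →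
      (∀ g : WreathG 2 (2 * m), ∀ x ∈ W, modelPhi2 g x ∈ W) ∧
      Module.finrank ℂ W = Nat.choose (2 * m) (2 * p₀) ∧
      W ≠ ⊥ ∧
      (∀ U : Submodule ℂ (ModelSpace 2 (2 * m)), U ≤ W →
        (∀ g : WreathG 2 (2 * m), ∀ x ∈ U, modelPhi2 g x ∈ U) → U = ⊥ ∨ U = W) := by
  rintro W rfl
  have hk : Even (2 * p₀) := even_two_mul p₀
  exact ⟨fun g _ => modelPhi2_mem_spanCS g, finrank_spanCS hk, spanCS_ne_bot hk (by omega),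
    fun _ => eq_bot_or_eq_spanCS⟩

/-- The span of the vectors `C_S` with `|S| = 2p₀` is a `φ`-invariant
subspace of `M` of dimension `binomial(2m, 2p₀)`, and the resulting representation of
`B_{2m}` on it is irreducible. -/
theorem span_CS_irreducible (m p₀ p₁ : ℕ) (hm : 1 ≤ m) (hs : p₀ + p₁ = m) :
    ∀ W : Submodule ℂ (ModelSpace 2 (2 * m)),
      W = Submodule.span ℂ
          {x | ∃ S : Finset (Fin (2 * m)), S.card = 2 * p₀ ∧ x = CS S} →
      (∀ g : WreathG 2 (2 * m), ∀ x ∈ W, modelPhi2 g x ∈ W) ∧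
      Module.finrank ℂ W = Nat.choose (2 * m) (2 * p₀) ∧
      W ≠ ⊥ ∧
      (∀ U : Submodule ℂ (ModelSpace 2 (2 * m)), U ≤ W →
        (∀ g : WreathG 2 (2 * m), ∀ x ∈ U, modelPhi2 g x ∈ U) → U = ⊥ ∨ U = W) :=
  span_CS_irreducible_general m p₀ p₁ hs
end
end

section
/- Fix r ≥ 1, m ≥ 1 and p_0,…,p_{r−1} ∈ ℕ with p_0 + ⋯ + p_{r−1} = m, and work in G(r,2m). For an r-tuple (S_0,…,S_{r−1}) of pairwise disjoint subsets of Fin 2m with union Fin 2m, let Δ_{S_0,…,S_{r−1}} = {v ∈ I(r,2m) : |v| is fixed-point-free and {i : z_i(v) = j} = S_j for every j ∈ {0,…,r−1}}, and let C_{S_0,…,S_{r−1}} = Σ_{v ∈ Δ_{S_0,…,S_{r−1}}} C_v ∈ M. Then the subspace of M spanned by all C_{S_0,…,S_{r−1}} with |S_j| = 2p_j for every j is invariant under all the operators φ(g) for g ∈ G(r,2m), and the resulting representation of G(r,2m) on it is irreducible. -/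
noncomputable section

/-- `Δ_{S_0,…,S_{r−1}}`: the set of absolute involutions of `G(r,2m)` whose underlying
permutation is fixed-point-free and whose set of `j`-colored positions is exactly `S j`. -/
def DeltaT {r m : ℕ} [NeZero r] (S : Fin r → Finset (Fin (2 * m))) :
    Finset (AbsInv r (2 * m)) :=
  Finset.univ.filter fun v =>
    (∀ j, v.1.p j ≠ j) ∧
    ∀ j : Fin r, (Finset.univ.filter fun i => v.1.z i = (j.val : ZMod r)) = S j

/-- `C_{S_0,…,S_{r−1}} = ∑_{v ∈ Δ_{S_0,…,S_{r−1}}} C_v`. -/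
def CT {r m : ℕ} [NeZero r] (S : Fin r → Finset (Fin (2 * m))) : ModelSpace r (2 * m) :=
  ∑ v ∈ DeltaT S, Finsupp.single v 1

/-!
The vectors `C_S` are permuted by the permutations of `G(r,2m)` and multiplied by scalars by the
color part, since all of `Δ_S` shares one color vector; so their span `W` is invariant. Any
nonzero invariant `U ≤ W` is also stable under the projection onto a single color vector, obtained
by averaging the diagonal operators `φ(z,1)` against the character `z ↦ ζ_r^{-⟨z,c⟩}`. On `W` that
projection lands in the line of one `C_S`, so `U` contains some `C_S` with `|S_j| = 2p_j`, and
then every other such `C_T`, because two such tuples differ by a permutation of `Fin 2m`.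
-/

open Finset

section RootsOfUnity

variable {r : ℕ} [NeZero r]

theorem zetaPow_eq_stdAddChar (a : ZMod r) : zetaPow r a = ZMod.stdAddChar a := by
  rw [ZMod.stdAddChar_apply, ZMod.toCircle_apply, zetaPow, zetaC, ← Complex.exp_nat_mul]
  ring_nf

theorem zetaPow_add (a b : ZMod r) : zetaPow r (a + b) = zetaPow r a * zetaPow r b := by
  simp only [zetaPow_eq_stdAddChar, AddChar.map_add_eq_mul]

theorem sum_zetaPow_dotProduct (n : ℕ) (c : Fin n → ZMod r) :
    ∑ z : Fin n → ZMod r, zetaPow r (∑ i, z i * c i) = if c = 0 then (r : ℂ) ^ n else 0 := by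
  have hsum (z : Fin n → ZMod r) : ZMod.stdAddChar (∑ i, z i * c i) =
      ∏ i, (ZMod.stdAddChar (z i * c i) : ℂ) :=
    map_prod ZMod.stdAddChar.toMonoidHom (fun i => Multiplicative.ofAdd (z i * c i)) _
  simp only [zetaPow_eq_stdAddChar, hsum]
  rw [← Fintype.prod_sum (fun i a => (ZMod.stdAddChar (a * c i) : ℂ))]
  simp only [AddChar.sum_mulShift _ (ZMod.isPrimitive_stdAddChar r), ZMod.card]
  split_ifs with hc
  · simp [hc]
  · obtain ⟨i, hi⟩ : ∃ i, c i ≠ 0 := by simpa [funext_iff] using hc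
    exact Finset.prod_eq_zero (Finset.mem_univ i) (by rw [if_neg hi, Nat.cast_zero])

end RootsOfUnity

section ModelOperators

variable {r n : ℕ}

theorem WreathG.pairing_congr_right (g : WreathG r n) {v w : WreathG r n} (h : v.z = w.z) :
    WreathG.pairing g v = WreathG.pairing g w := by
  rw [WreathG.pairing, WreathG.pairing, h]

def AbsInv.aconjEquiv (τ : Equiv.Perm (Fin n)) : AbsInv r n ≃ AbsInv r n where
  toFun v := ⟨WreathG.aconj τ v.1, v.2.aconj τ⟩
  invFun v := ⟨WreathG.aconj τ⁻¹ v.1, v.2.aconj τ⁻¹⟩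
  left_inv v := by ext <;> simp [WreathG.aconj, Equiv.Perm.inv_def, mul_assoc]
  right_inv v := by ext <;> simp [WreathG.aconj, Equiv.Perm.inv_def, mul_assoc]

@[simp] theorem AbsInv.aconjEquiv_coe (τ : Equiv.Perm (Fin n)) (v : AbsInv r n) :
    (AbsInv.aconjEquiv τ v).1 = WreathG.aconj τ v.1 := rfl

theorem modelPhi_single (g : WreathG r n) (v : AbsInv r n) (a : ℂ) :
    modelPhi g (Finsupp.single v a) =
      zetaPow r (WreathG.pairing g v.1) • Finsupp.single (AbsInv.aconjEquiv g.p v) a := by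
  rw [modelPhi, Finsupp.lsum_single]
  rfl

theorem modelPhi_diag_apply (z : Fin n → ZMod r) (x : ModelSpace r n) (v : AbsInv r n) :
    modelPhi ⟨z, 1⟩ x v = zetaPow r (∑ i, z i * v.1.z i) * x v := by
  induction x using Finsupp.induction_linear with
  | zero => simp
  | add x y hx hy => rw [map_add, Finsupp.add_apply, hx, hy, Finsupp.add_apply, mul_add]
  | single w a =>
    have hw : AbsInv.aconjEquiv 1 w = w := (AbsInv.aconjEquiv 1).apply_symm_apply w
    rw [modelPhi_single, hw]
    rcases eq_or_ne w v with rfl | hne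
    · simp [WreathG.pairing]
    · simp [Finsupp.single_eq_of_ne hne.symm]

variable [NeZero r]

theorem sum_zetaPow_smul_modelPhi_diag (c : Fin n → ZMod r) (x : ModelSpace r n) :
    ∑ z : Fin n → ZMod r, zetaPow r (-∑ i, z i * c i) • modelPhi ⟨z, 1⟩ x =
      (r : ℂ) ^ n • x.filter (fun v => v.1.z = c) := by
  ext v
  have hchar (z : Fin n → ZMod r) : zetaPow r (-∑ i, z i * c i) * zetaPow r (∑ i, z i * v.1.z i)
      = zetaPow r (∑ i, z i * (v.1.z - c) i) := by
    rw [← zetaPow_add]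
    simp only [Pi.sub_apply, mul_sub, Finset.sum_sub_distrib]
    ring_nf
  simp only [Finsupp.finsetSum_apply, Finsupp.smul_apply, smul_eq_mul, modelPhi_diag_apply,
    ← mul_assoc, hchar, ← Finset.sum_mul, sum_zetaPow_dotProduct, sub_eq_zero,
    Finsupp.filter_apply]
  split_ifs <;> simp

theorem filter_mem_of_diag_invariant {U : Submodule ℂ (ModelSpace r n)}
    (hU : ∀ z : Fin n → ZMod r, ∀ x ∈ U, modelPhi ⟨z, 1⟩ x ∈ U) {x : ModelSpace r n}
    (hx : x ∈ U) (c : Fin n → ZMod r) : x.filter (fun v => v.1.z = c) ∈ U := by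
  have hr : (r : ℂ) ^ n ≠ 0 := pow_ne_zero _ (Nat.cast_ne_zero.mpr (NeZero.ne r))
  rw [← U.smul_mem_iff hr, ← sum_zetaPow_smul_modelPhi_diag]
  exact U.sum_mem fun z _ => U.smul_mem _ (hU z x hx)

end ModelOperators

section ColorClasses

variable {r n : ℕ}

def colorClasses (c : Fin n → ZMod r) (j : Fin r) : Finset (Fin n) :=
  univ.filter fun i => c i = (j.val : ZMod r)

theorem Fin.natCast_val_injective_zmod : Function.Injective fun j : Fin r => (j.val : ZMod r) :=
  fun j k h => Fin.ext <| by
    simpa [ZMod.val_cast_of_lt j.isLt, ZMod.val_cast_of_lt k.isLt] using congrArg ZMod.val h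

theorem colorClasses_injective [NeZero r] :
    Function.Injective (colorClasses : (Fin n → ZMod r) → Fin r → Finset (Fin n)) := by
  intro c d h
  funext i
  obtain ⟨j, hj⟩ : ∃ j : Fin r, (j.val : ZMod r) = c i :=
    ⟨⟨(c i).val, (c i).val_lt⟩, ZMod.natCast_zmod_val _⟩
  have hi : i ∈ colorClasses c j := by simp [colorClasses, hj]
  rw [h] at hi
  simp only [colorClasses, mem_filter, mem_univ, true_and] at hi
  rw [hi, hj]

theorem colorClasses_comp_symm (c : Fin n → ZMod r) (τ : Equiv.Perm (Fin n)) :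
    colorClasses (c ∘ τ.symm) = fun j => (colorClasses c j).image τ := by
  funext j
  ext i
  simp only [colorClasses, mem_filter, mem_univ, true_and, mem_image, Function.comp_apply]
  exact ⟨fun h => ⟨τ.symm i, h, τ.apply_symm_apply i⟩, by rintro ⟨a, ha, rfl⟩; simpa using ha⟩

end ColorClasses

section SizedPartitions

variable {ι α : Type*}

def IsSizedPartition (S : ι → Finset α) (k : ι → ℕ) : Prop :=
  (∀ j j', j ≠ j' → Disjoint (S j) (S j')) ∧ (∀ a, ∃ j, a ∈ S j) ∧ ∀ j, (S j).card = k j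

theorem IsSizedPartition.image [DecidableEq α] {S : ι → Finset α} {k : ι → ℕ}
    (h : IsSizedPartition S k) (σ : Equiv.Perm α) :
    IsSizedPartition (fun j => (S j).image σ) k := by
  refine ⟨fun j j' hjj' => (disjoint_image σ.injective).2 (h.1 j j' hjj'), fun a => ?_,
    fun j => (card_image_of_injective _ σ.injective).trans (h.2.2 j)⟩
  obtain ⟨j, hj⟩ := h.2.1 (σ.symm a)
  exact ⟨j, mem_image.2 ⟨_, hj, σ.apply_symm_apply a⟩⟩

theorem isSizedPartition_fibers [Fintype α] [DecidableEq ι] (f : α → ι) {k : ι → ℕ}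
    (hk : ∀ j, (univ.filter fun a => f a = j).card = k j) :
    IsSizedPartition (fun j => univ.filter fun a => f a = j) k := by
  refine ⟨fun j j' hjj' => disjoint_filter.2 fun a _ haj haj' => hjj' (haj.symm.trans haj'),
    fun a => ⟨f a, by simp⟩, hk⟩

theorem IsSizedPartition.exists_eq_fibers [Fintype α] [DecidableEq ι] {S : ι → Finset α}
    {k : ι → ℕ} (h : IsSizedPartition S k) :
    ∃ f : α → ι, ∀ j, S j = univ.filter fun a => f a = j := by
  choose f hf using h.2.1
  refine ⟨f, fun j => ?_⟩
  ext a
  simp only [mem_filter, mem_univ, true_and]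
  refine ⟨fun ha => by_contra fun hne => disjoint_left.1 (h.1 _ _ hne) (hf a) ha, ?_⟩
  rintro rfl
  exact hf a

theorem IsSizedPartition.exists_perm [Fintype α] [DecidableEq α] [DecidableEq ι]
    {S T : ι → Finset α} {k : ι → ℕ}
    (hS : IsSizedPartition S k) (hT : IsSizedPartition T k) :
    ∃ σ : Equiv.Perm α, ∀ j, (S j).image σ = T j := by
  obtain ⟨f, hf⟩ := hS.exists_eq_fibers
  obtain ⟨g, hg⟩ := hT.exists_eq_fibers
  have e (j : ι) : {a // f a = j} ≃ {b // g b = j} := Fintype.equivOfCardEq <| by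
    rw [Fintype.card_subtype, Fintype.card_subtype, ← hf, ← hg, hS.2.2, hT.2.2]
  refine ⟨Equiv.ofFiberEquiv e, fun j => ?_⟩
  ext b
  rw [hf, hg]
  simp only [mem_image, mem_filter, mem_univ, true_and]
  refine ⟨?_, fun hb => ⟨(Equiv.ofFiberEquiv e).symm b, ?_, Equiv.apply_symm_apply _ _⟩⟩
  · rintro ⟨a, rfl, rfl⟩
    exact Equiv.ofFiberEquiv_map e a
  · rw [← hb, ← Equiv.ofFiberEquiv_map e, Equiv.apply_symm_apply]

end SizedPartitions

section ColorTuples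

variable {r m : ℕ} [NeZero r]

theorem mem_DeltaT {S : Fin r → Finset (Fin (2 * m))} {v : AbsInv r (2 * m)} :
    v ∈ DeltaT S ↔ (∀ j, v.1.p j ≠ j) ∧ colorClasses v.1.z = S := by
  simp [DeltaT, colorClasses, funext_iff]

theorem z_eq_of_mem_DeltaT {S : Fin r → Finset (Fin (2 * m))} {v w : AbsInv r (2 * m)}
    (hv : v ∈ DeltaT S) (hw : w ∈ DeltaT S) : v.1.z = w.1.z :=
  colorClasses_injective ((mem_DeltaT.1 hv).2.trans (mem_DeltaT.1 hw).2.symm)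

theorem CT_apply (S : Fin r → Finset (Fin (2 * m))) (v : AbsInv r (2 * m)) :
    CT S v = if v ∈ DeltaT S then 1 else 0 := by
  simp [CT, Finsupp.finsetSum_apply, Finsupp.single_apply]

theorem aconjEquiv_mem_DeltaT_image_iff (τ : Equiv.Perm (Fin (2 * m)))
    {S : Fin r → Finset (Fin (2 * m))} {v : AbsInv r (2 * m)} :
    AbsInv.aconjEquiv τ v ∈ DeltaT (fun j => (S j).image τ) ↔ v ∈ DeltaT S := by
  have hfix : (∀ j, (τ * v.1.p * τ⁻¹) j ≠ j) ↔ ∀ j, v.1.p j ≠ j := by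
    rw [← τ.forall_congr_right]
    simp [Equiv.Perm.mul_apply]
  have himage : (fun j => (colorClasses v.1.z j).image τ) = (fun j => (S j).image τ) ↔
      colorClasses v.1.z = S := by
    refine ⟨fun h => funext fun j => Finset.image_injective τ.injective (congrFun h j), ?_⟩
    rintro rfl; rfl
  simp only [mem_DeltaT, AbsInv.aconjEquiv_coe, WreathG.aconj, colorClasses_comp_symm]
  exact and_congr hfix himage

theorem modelPhi_CT (g : WreathG r (2 * m)) {S : Fin r → Finset (Fin (2 * m))}
    {v : AbsInv r (2 * m)} (hv : v ∈ DeltaT S) :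
    modelPhi g (CT S) = zetaPow r (WreathG.pairing g v.1) • CT (fun j => (S j).image g.p) := by
  simp only [CT, map_sum, modelPhi_single, Finset.smul_sum]
  refine Finset.sum_equiv (AbsInv.aconjEquiv g.p)
    (fun w => (aconjEquiv_mem_DeltaT_image_iff g.p).symm) fun w hw => ?_
  rw [WreathG.pairing_congr_right g (z_eq_of_mem_DeltaT hw hv)]

theorem modelPhi_CT_mem_span_singleton (g : WreathG r (2 * m))
    (S : Fin r → Finset (Fin (2 * m))) :
    modelPhi g (CT S) ∈ ℂ ∙ CT (fun j => (S j).image g.p) := by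
  obtain ⟨v, hv⟩ | hS := (DeltaT S).eq_empty_or_nonempty.symm
  · rw [modelPhi_CT g hv]
    exact Submodule.smul_mem _ _ (Submodule.mem_span_singleton_self _)
  · simp [CT, hS]

theorem filter_CT_eq_smul {S : Fin r → Finset (Fin (2 * m))} {v : AbsInv r (2 * m)}
    (hv : v ∈ DeltaT S) (T : Fin r → Finset (Fin (2 * m))) :
    (CT T).filter (fun w => w.1.z = v.1.z) = CT T v • CT S := by
  obtain ⟨hvfix, rfl⟩ := mem_DeltaT.1 hv
  ext w
  simp only [Finsupp.filter_apply, Finsupp.smul_apply, smul_eq_mul, CT_apply, mem_DeltaT]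
  by_cases hw : w.1.z = v.1.z
  · simp [hw, hvfix, ite_and]
  · have : colorClasses w.1.z ≠ colorClasses v.1.z := colorClasses_injective.ne hw
    simp [hw, this]

theorem filter_eq_smul_CT_of_mem_span {x : ModelSpace r (2 * m)}
    (hx : x ∈ Submodule.span ℂ (Set.range CT)) {S : Fin r → Finset (Fin (2 * m))}
    {v : AbsInv r (2 * m)} (hv : v ∈ DeltaT S) :
    x.filter (fun w => w.1.z = v.1.z) = x v • CT S := by
  induction hx using Submodule.span_induction with
  | mem x hx =>
    obtain ⟨T, rfl⟩ := hx
    exact filter_CT_eq_smul hv T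
  | zero => simp [Finsupp.filter_zero]
  | add x y _ _ hx hy => rw [Finsupp.filter_add, hx, hy, Finsupp.add_apply, add_smul]
  | smul a x _ hx => rw [Finsupp.filter_smul, hx, Finsupp.smul_apply, smul_eq_mul, mul_smul]

theorem exists_mem_DeltaT_of_mem_span {A : Set (Fin r → Finset (Fin (2 * m)))}
    {x : ModelSpace r (2 * m)} (hx : x ∈ Submodule.span ℂ (CT '' A)) {v : AbsInv r (2 * m)}
    (hxv : x v ≠ 0) : ∃ S ∈ A, v ∈ DeltaT S := by
  have hle : Submodule.span ℂ (CT '' A) ≤ Finsupp.supported ℂ ℂ (⋃ S ∈ A, ↑(DeltaT S)) := by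
    refine Submodule.span_le.2 ?_
    rintro _ ⟨S, hS, rfl⟩
    refine (Finsupp.mem_supported _ _).2 fun w hw => Set.mem_biUnion hS ?_
    rw [Finset.mem_coe, Finsupp.mem_support_iff, CT_apply] at hw
    exact Finset.mem_coe.2 (by_contra fun h => hw (if_neg h))
  simpa using (Finsupp.mem_supported _ _).1 (hle hx) (Finsupp.mem_support_iff.2 hxv)

theorem CT_ne_zero {S : Fin r → Finset (Fin (2 * m))} {v : AbsInv r (2 * m)}
    (hv : v ∈ DeltaT S) : CT S ≠ 0 :=
  DFunLike.ne_iff.2 ⟨v, by simp [CT_apply, hv]⟩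

theorem modelPhi_perm_CT (σ : Equiv.Perm (Fin (2 * m))) {S : Fin r → Finset (Fin (2 * m))}
    {v : AbsInv r (2 * m)} (hv : v ∈ DeltaT S) :
    modelPhi ⟨0, σ⟩ (CT S) = CT (fun j => (S j).image σ) := by
  rw [modelPhi_CT _ hv]
  simp [WreathG.pairing, zetaPow]

theorem modelPhi_mem_span_CT (k : Fin r → ℕ) (g : WreathG r (2 * m))
    {x : ModelSpace r (2 * m)}
    (hx : x ∈ Submodule.span ℂ (CT '' {S | IsSizedPartition S k})) :
    modelPhi g x ∈ Submodule.span ℂ (CT '' {S | IsSizedPartition S k}) := by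
  refine (Submodule.span_le (p := (Submodule.span ℂ _).comap (modelPhi g))).2 ?_ hx
  rintro _ ⟨S, hS, rfl⟩
  have hmem :
      CT (fun j => (S j).image g.p) ∈ Submodule.span ℂ (CT '' {S | IsSizedPartition S k}) :=
    Submodule.subset_span ⟨_, hS.image g.p, rfl⟩
  exact (Submodule.span_singleton_le_iff_mem _ _).2 hmem (modelPhi_CT_mem_span_singleton g S)

theorem eq_span_CT_of_invariant (k : Fin r → ℕ) {U : Submodule ℂ (ModelSpace r (2 * m))}
    (hUW : U ≤ Submodule.span ℂ (CT '' {S | IsSizedPartition S k}))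
    (hU : ∀ g : WreathG r (2 * m), ∀ x ∈ U, modelPhi g x ∈ U) (hU0 : U ≠ ⊥) :
    U = Submodule.span ℂ (CT '' {S | IsSizedPartition S k}) := by
  obtain ⟨x, hxU, hx0⟩ := (Submodule.ne_bot_iff U).1 hU0
  obtain ⟨v, hxv⟩ := DFunLike.ne_iff.1 hx0
  obtain ⟨S, hS, hvS⟩ := exists_mem_DeltaT_of_mem_span (hUW hxU) hxv
  have hfilter : x.filter (fun w => w.1.z = v.1.z) = x v • CT S :=
    filter_eq_smul_CT_of_mem_span (Submodule.span_mono (Set.image_subset_range _ _) (hUW hxU)) hvS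
  have hCT : CT S ∈ U := by
    have := filter_mem_of_diag_invariant (fun z => hU ⟨z, 1⟩) hxU v.1.z
    rwa [hfilter, U.smul_mem_iff hxv] at this
  refine le_antisymm hUW (Submodule.span_le.2 ?_)
  rintro _ ⟨T, hT, rfl⟩
  obtain ⟨σ, hσ⟩ := IsSizedPartition.exists_perm hS hT
  have := hU ⟨0, σ⟩ _ hCT
  rwa [modelPhi_perm_CT σ hvS, funext hσ] at this

end ColorTuples

section Existence

variable {r m : ℕ} [NeZero r]

theorem exists_isSizedPartition_DeltaT_nonempty (p : Fin r → ℕ) (hp : ∑ j, p j = m) :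
    ∃ S : Fin r → Finset (Fin (2 * m)),
      IsSizedPartition S (fun j => 2 * p j) ∧ (DeltaT S).Nonempty := by
  let e : Fin (2 * m) ≃ Fin 2 × Σ j, Fin (p j) := Fintype.equivOfCardEq (by simp [hp])
  let col (i : Fin (2 * m)) : Fin r := (e i).2.1
  let σ : Equiv.Perm (Fin (2 * m)) :=
    e.symm.permCongr (Equiv.prodCongr (Equiv.swap 0 1) (Equiv.refl _))
  let v : WreathG r (2 * m) := ⟨fun i => ((col i).val : ZMod r), σ⟩
  have hcol (i : Fin (2 * m)) : col (σ i) = col i := by simp [σ, col, Equiv.permCongr_apply]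
  have hσ2 : σ ^ 2 = 1 := by
    ext i
    simp [σ, sq, Equiv.permCongr_apply, Prod.map, Equiv.swap_apply_self]
  have hσfix (i : Fin (2 * m)) : σ i ≠ i := fun hi => by
    have := congrArg (fun i => (e i).1) hi
    simp only [σ, Equiv.permCongr_apply, Equiv.symm_symm, Equiv.apply_symm_apply,
      Equiv.prodCongr_apply, Prod.map_fst] at this
    exact (by decide : ∀ a : Fin 2, Equiv.swap 0 1 a ≠ a) _ this
  have hcard (j : Fin r) : (univ.filter fun i => col i = j).card = 2 * p j := by
    rw [← Fintype.card_subtype, Fintype.card_congr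
      (e.subtypeEquiv (p := fun i => col i = j) (q := fun x => x.2.1 = j) fun _ => Iff.rfl),
      Fintype.card_subtype, ← univ_product_univ,
      filter_product_right (q := fun s : Σ j, Fin (p j) => s.1 = j), card_product,
      ← Fintype.card_subtype, Fintype.card_congr (Equiv.sigmaSubtype j)]
    simp
  have hv : WreathG.IsAbsInv v := ⟨hσ2, funext fun i => by simp [v, hcol]⟩
  have hclasses : colorClasses v.z = fun j => univ.filter fun i => col i = j := by
    funext j
    simp [colorClasses, v, Fin.natCast_val_injective_zmod.eq_iff]
  exact ⟨_, isSizedPartition_fibers col hcard, ⟨v, hv⟩, mem_DeltaT.2 ⟨hσfix, hclasses⟩⟩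

end Existence

theorem span_CT_irreducible_general (r m : ℕ) [NeZero r]
    (p : Fin r → ℕ) (hp : ∑ j, p j = m) :
    ∀ W : Submodule ℂ (ModelSpace r (2 * m)),
      W = Submodule.span ℂ
          {x | ∃ S : Fin r → Finset (Fin (2 * m)),
            (∀ j k, j ≠ k → Disjoint (S j) (S k)) ∧
            (∀ i, ∃ j, i ∈ S j) ∧
            (∀ j, (S j).card = 2 * p j) ∧ x = CT S} →
      (∀ g : WreathG r (2 * m), ∀ x ∈ W, modelPhi g x ∈ W) ∧
      W ≠ ⊥ ∧
      (∀ U : Submodule ℂ (ModelSpace r (2 * m)), U ≤ W →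
        (∀ g : WreathG r (2 * m), ∀ x ∈ U, modelPhi g x ∈ U) → U = ⊥ ∨ U = W) := by
  intro W hW
  replace hW : W = Submodule.span ℂ (CT '' {S | IsSizedPartition S fun j => 2 * p j}) := by
    rw [hW]
    congr 1
    ext x
    simp [IsSizedPartition, and_assoc, eq_comm]
  subst hW
  obtain ⟨S, hS, v, hv⟩ := exists_isSizedPartition_DeltaT_nonempty p hp
  refine ⟨fun g x hx => modelPhi_mem_span_CT _ g hx, ?_,
    fun U hUW hU => or_iff_not_imp_left.2 (eq_span_CT_of_invariant _ hUW hU)⟩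
  exact (Submodule.ne_bot_iff _).2 ⟨CT S, Submodule.subset_span ⟨S, hS, rfl⟩, CT_ne_zero hv⟩

/-- The span of the vectors `C_{S_0,…,S_{r−1}}`, where `(S_0,…,S_{r−1})`
ranges over tuples of pairwise disjoint subsets of `Fin 2m` with union everything and
`|S_j| = 2p_j`, is a `φ`-invariant subspace of `M`, and the resulting representation of
`G(r,2m)` on it is irreducible. -/
theorem span_CT_irreducible (r m : ℕ) [NeZero r] (hm : 1 ≤ m)
    (p : Fin r → ℕ) (hp : ∑ j, p j = m) :
    ∀ W : Submodule ℂ (ModelSpace r (2 * m)),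
      W = Submodule.span ℂ
          {x | ∃ S : Fin r → Finset (Fin (2 * m)),
            (∀ j k, j ≠ k → Disjoint (S j) (S k)) ∧
            (∀ i, ∃ j, i ∈ S j) ∧
            (∀ j, (S j).card = 2 * p j) ∧ x = CT S} →
      (∀ g : WreathG r (2 * m), ∀ x ∈ W, modelPhi g x ∈ W) ∧
      W ≠ ⊥ ∧
      (∀ U : Submodule ℂ (ModelSpace r (2 * m)), U ≤ W →
        (∀ g : WreathG r (2 * m), ∀ x ∈ U, modelPhi g x ∈ U) → U = ⊥ ∨ U = W) :=
  span_CT_irreducible_general r m p hp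
end
end
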